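/- Let P be a finite Γ-colored d-complete poset with top tree T and assume Γ is simply laced. Then the restriction κ|_T : T → Γ is a bijection, and for distinct x, y ∈ T, x and y are neighbors in the subposet T (one covers the other in T) if and only if κ(x) and κ(y) are adjacent in Γ. In other words, κ|_T is a graph isomorphism from the Hasse diagram graph of T onto Γ. -/

import Mathlib

/-!
Common definitions: Dynkin diagram data, Γ-colored posets, and the coloring
properties EC, NA, AC, ICE2, UCB1, LCB1 from the paper, together with
Γ-colored d-complete and Γ-colored minuscule posets, top trees, slant
irreducibility, extensions, lower frontier censuses, and full heaps.
-/

universe u v w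

variable {Γ : Type u} {P : Type v}

/-- The integers `θ a b` form a Dynkin diagram datum. -/
def DynkinDatum (θ : Γ → Γ → ℤ) : Prop :=
  (∀ a : Γ, θ a a = 2) ∧ (∀ a b : Γ, a ≠ b → θ a b ≤ 0) ∧
    (∀ a b : Γ, a ≠ b → (θ a b = 0 ↔ θ b a = 0))

/-- Colors `a` and `b` are adjacent. -/
def AdjColor (θ : Γ → Γ → ℤ) (a b : Γ) : Prop := θ a b < 0

/-- The Dynkin diagram is simply laced. -/
def SimplyLaced (θ : Γ → Γ → ℤ) : Prop :=
  ∀ a b : Γ, a ≠ b → θ a b = 0 ∨ θ a b = -1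

/-- All closed intervals are finite. -/
def LocallyFinitePoset (α : Type*) [PartialOrder α] : Prop :=
  ∀ x y : α, (Set.Icc x y).Finite

/-- A poset is connected if it cannot be written as a disjoint union of two nonempty
subposets with no comparabilities between them. -/
def ConnectedPoset (α : Type*) [PartialOrder α] : Prop :=
  ∀ S : Set α, S.Nonempty → Sᶜ.Nonempty → ∃ x ∈ S, ∃ y ∈ Sᶜ, x ≤ y ∨ y ≤ x

section
variable [PartialOrder P]

/-- (EC) Elements with equal colors are comparable. -/
def ColoredEC (κ : P → Γ) : Prop := ∀ x y : P, κ x = κ y → x ≤ y ∨ y ≤ x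

/-- (NA) Neighbors have adjacent colors. -/
def ColoredNA (θ : Γ → Γ → ℤ) (κ : P → Γ) : Prop :=
  ∀ x y : P, x ⋖ y → AdjColor θ (κ x) (κ y)

/-- (AC) Elements with adjacent colors are comparable. -/
def ColoredAC (θ : Γ → Γ → ℤ) (κ : P → Γ) : Prop :=
  ∀ x y : P, AdjColor θ (κ x) (κ y) → x ≤ y ∨ y ≤ x

/-- (ICE2) Between consecutive elements of a color `a`, the census of colors
adjacent to `a` is two. -/
def ColoredICE2 (θ : Γ → Γ → ℤ) (κ : P → Γ) : Prop :=
  ∀ (a : Γ) (x y : P), κ x = a → κ y = a → x < y → (∀ z ∈ Set.Ioo x y, κ z ≠ a) →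
    (∑ᶠ z ∈ Set.Ioo x y, -θ (κ z) a) = 2

/-- `U(x,P)`: elements above `x` with color adjacent to that of `x`. -/
def USet (θ : Γ → Γ → ℤ) (κ : P → Γ) (x : P) : Set P :=
  {y : P | x < y ∧ AdjColor θ (κ y) (κ x)}

/-- `L(x,P)`: elements below `x` with color adjacent to that of `x`. -/
def LSet (θ : Γ → Γ → ℤ) (κ : P → Γ) (x : P) : Set P :=
  {y : P | y < x ∧ AdjColor θ (κ y) (κ x)}

/-- (UCB1) Upper frontier census bound. -/
def ColoredUCB1 (θ : Γ → Γ → ℤ) (κ : P → Γ) : Prop :=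
  ∀ x : P, (∀ y : P, κ y = κ x → ¬x < y) →
    (USet θ κ x).Finite ∧ (∑ᶠ y ∈ USet θ κ x, -θ (κ y) (κ x)) ≤ 1

/-- (LCB1) Lower frontier census bound. -/
def ColoredLCB1 (θ : Γ → Γ → ℤ) (κ : P → Γ) : Prop :=
  ∀ x : P, (∀ y : P, κ y = κ x → ¬y < x) →
    (LSet θ κ x).Finite ∧ (∑ᶠ y ∈ LSet θ κ x, -θ (κ y) (κ x)) ≤ 1

/-- A Γ-colored d-complete poset: locally finite, surjectively colored, and
satisfying EC, NA, AC, ICE2, and UCB1. -/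
def GColoredDComplete (θ : Γ → Γ → ℤ) (κ : P → Γ) : Prop :=
  LocallyFinitePoset P ∧ Function.Surjective κ ∧ ColoredEC κ ∧ ColoredNA θ κ ∧
    ColoredAC θ κ ∧ ColoredICE2 θ κ ∧ ColoredUCB1 θ κ

/-- A Γ-colored minuscule poset: Γ-colored d-complete and LCB1. -/
def GColoredMinuscule (θ : Γ → Γ → ℤ) (κ : P → Γ) : Prop :=
  GColoredDComplete θ κ ∧ ColoredLCB1 θ κ

/-- The top tree: the set of elements maximal in their color class. -/
def TopTree (κ : P → Γ) : Set P := {x : P | ∀ y : P, κ y = κ x → ¬x < y}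

/-- `x` is covered by `y` within the subposet `S`. -/
def CoversIn (S : Set P) (x y : P) : Prop :=
  x ∈ S ∧ y ∈ S ∧ x < y ∧ ∀ z ∈ S, x < z → ¬z < y

/-- Slant irreducibility of a Γ-colored d-complete poset. -/
def SlantIrreducible (κ : P → Γ) : Prop :=
  ConnectedPoset P ∧ ∀ x y : P, CoversIn (TopTree κ) x y → ∃ z : P, z ≠ y ∧ κ z = κ y

/-- A saturated chain in a subposet `S`: a chain that is convex in `S`. -/
def SaturatedChainIn (S C : Set P) : Prop :=
  C ⊆ S ∧ IsChain (· ≤ ·) C ∧ ∀ x ∈ C, ∀ y ∈ C, ∀ z ∈ S, x < z → z < y → z ∈ C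

/-- The lower frontier census at the element `y`. -/
noncomputable def LCensus (θ : Γ → Γ → ℤ) (κ : P → Γ) (y : P) : ℤ :=
  ∑ᶠ x ∈ LSet θ κ y, -θ (κ x) (κ y)

/-- A full heap: locally finite, surjectively colored, EC, NA, AC, ICE2, and every
color class order-isomorphic to ℤ. -/
def FullHeap (θ : Γ → Γ → ℤ) (κ : P → Γ) : Prop :=
  LocallyFinitePoset P ∧ Function.Surjective κ ∧ ColoredEC κ ∧ ColoredNA θ κ ∧
    ColoredAC θ κ ∧ ColoredICE2 θ κ ∧ ∀ a : Γ, Nonempty ({x : P // κ x = a} ≃o ℤ)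

end

/-- `ι` realizes the colored poset `A` as an order filter of the colored poset `B`. -/
def FilterEmbedding {G : Type*} {A B : Type*} [PartialOrder A] [PartialOrder B]
    (κ : A → G) (κ' : B → G) (ι : A → B) : Prop :=
  (∀ p q : A, ι p ≤ ι q ↔ p ≤ q) ∧ (∀ p : A, κ' (ι p) = κ p) ∧ IsUpperSet (Set.range ι)

/-- `B` is an extension of `A` by the color `a`, with extending element `x`. -/
def IsExtensionBy {G : Type*} {A B : Type*} [PartialOrder A] [PartialOrder B]
    (θ : G → G → ℤ) (κ : A → G) (κ' : B → G) (a : G) (ι : A → B) (x : B) : Prop :=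
  Finite B ∧ GColoredDComplete θ κ' ∧ ConnectedPoset B ∧
    FilterEmbedding κ κ' ι ∧ (Set.range ι)ᶜ = {x} ∧ κ' x = a

/-!
Fix `x` in the top tree. In a simply laced diagram every element of `U(x,P)` contributes `1` to
the census, so UCB1 leaves at most one element in `U(x,P)`. Every upper cover of `x` lies in
`U(x,P)` (NA, and `x` is maximal in its color); since upper covers exist below anything above `x`,
`U(x,P)` is then exactly the set of upper covers of `x`. A cover of `x` inside the top tree is a
cover in `P`: an upper cover `w` of `x` below it lies under the top element `t` of its color, and
`t ∈ U(x,P)` forces `t = w`. With AC this matches covers in the top tree with adjacent colors.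
-/

section TopTree

variable [PartialOrder P] {θ : Γ → Γ → ℤ} {κ : P → Γ} {x y : P}

lemma AdjColor.symm (hθ : DynkinDatum θ) {a b : Γ} (hab : a ≠ b) (h : AdjColor θ a b) :
    AdjColor θ b a :=
  (hθ.2.1 b a hab.symm).lt_of_ne fun h0 => h.ne ((hθ.2.2 a b hab).mpr h0)

lemma CovBy.coversIn {S : Set P} (hx : x ∈ S) (hy : y ∈ S) (h : x ⋖ y) : CoversIn S x y :=
  ⟨hx, hy, h.lt, fun _ _ hz => h.2 hz⟩

lemma topTree_injOn (hec : ColoredEC κ) : Set.InjOn κ (TopTree κ) := by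
  intro x hx y hy h
  rcases hec x y h with hle | hle
  · exact hle.eq_of_not_lt (hx y h.symm)
  · exact (hle.eq_of_not_lt (hy x h)).symm

lemma exists_le_mem_topTree [Finite P] (w : P) : ∃ t ∈ TopTree κ, κ t = κ w ∧ w ≤ t := by
  obtain ⟨t, hwt, ht, htmax⟩ := Finite.exists_le_maximal (p := fun y => κ y = κ w) rfl
  exact ⟨t, fun y hy hty => (htmax (hy.trans ht) hty.le).not_gt hty, ht, hwt⟩

lemma color_ne_of_mem_topTree (hx : x ∈ TopTree κ) (hxy : x < y) : κ y ≠ κ x :=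
  fun h => hx y h hxy

lemma uSet_subsingleton (hsl : SimplyLaced θ) (hucb : ColoredUCB1 θ κ) (hx : x ∈ TopTree κ) :
    (USet θ κ x).Subsingleton := by
  obtain ⟨hfin, hsum⟩ := hucb x hx
  have hone : ∀ y ∈ USet θ κ x, -θ (κ y) (κ x) = 1 := fun y hy => by
    have hneg : θ (κ y) (κ x) < 0 := hy.2
    rcases hsl _ _ (color_ne_of_mem_topTree hx hy.1) with h | h <;> omega
  have hcard : ((USet θ κ x).ncard : ℤ) ≤ 1 := by
    rwa [finsum_mem_congr rfl hone, ← Nat.cast_one, ← Nat.cast_finsum_mem hfin, finsum_one]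
      at hsum
  have := hfin.to_subtype
  exact Set.ncard_le_one_iff_subsingleton.mp (by exact_mod_cast hcard)

lemma mem_uSet_of_covBy (hθ : DynkinDatum θ) (hna : ColoredNA θ κ) (hx : x ∈ TopTree κ)
    (h : x ⋖ y) : y ∈ USet θ κ x :=
  ⟨h.lt, (hna x y h).symm hθ (color_ne_of_mem_topTree hx h.lt).symm⟩

section Finite

variable [Finite P] (hθ : DynkinDatum θ) (hsl : SimplyLaced θ) (hna : ColoredNA θ κ)
  (hucb : ColoredUCB1 θ κ)
include hθ hsl hna hucb

lemma covBy_iff_mem_uSet (hx : x ∈ TopTree κ) : x ⋖ y ↔ y ∈ USet θ κ x := by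
  refine ⟨mem_uSet_of_covBy hθ hna hx, fun hy => ⟨hy.1, fun z hxz hzy => ?_⟩⟩
  obtain ⟨w, hxw, hwz⟩ := exists_covBy_le_of_lt hxz
  have hwy : w = y := uSet_subsingleton hsl hucb hx (mem_uSet_of_covBy hθ hna hx hxw) hy
  exact (hwz.trans_lt hzy).ne hwy

lemma coversIn_topTree_iff_covBy (hx : x ∈ TopTree κ) (hy : y ∈ TopTree κ) :
    CoversIn (TopTree κ) x y ↔ x ⋖ y := by
  refine ⟨fun ⟨_, _, hxy, hgap⟩ => ?_, CovBy.coversIn hx hy⟩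
  obtain ⟨w, hxw, hwy⟩ := exists_covBy_le_of_lt hxy
  obtain ⟨t, ht, htw, hwt⟩ := exists_le_mem_topTree (κ := κ) w
  have hwU := mem_uSet_of_covBy hθ hna hx hxw
  have htU : t ∈ USet θ κ x := ⟨hxw.lt.trans_le hwt, htw ▸ hwU.2⟩
  obtain rfl : t = w := uSet_subsingleton hsl hucb hx htU hwU
  obtain rfl : t = y := hwy.eq_of_not_lt (hgap t ht hxw.lt)
  exact hxw

end Finite

end TopTree

theorem topTree_graphIso_general [PartialOrder P] [Fintype P]
    (θ : Γ → Γ → ℤ) (κ : P → Γ) (hθ : DynkinDatum θ) (hsl : SimplyLaced θ)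
    (hdc : GColoredDComplete θ κ) :
    (Set.InjOn κ (TopTree κ) ∧ ∀ a : Γ, ∃ x ∈ TopTree κ, κ x = a) ∧
      ∀ x ∈ TopTree κ, ∀ y ∈ TopTree κ, x ≠ y →
        ((CoversIn (TopTree κ) x y ∨ CoversIn (TopTree κ) y x) ↔
          AdjColor θ (κ x) (κ y)) := by
  obtain ⟨-, hsurj, hec, hna, hac, -, hucb⟩ := hdc
  have hinj := topTree_injOn hec
  refine ⟨⟨hinj, fun a => ?_⟩, fun x hx y hy hne => ?_⟩
  · obtain ⟨p, rfl⟩ := hsurj a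
    obtain ⟨t, ht, htp, -⟩ := exists_le_mem_topTree (κ := κ) p
    exact ⟨t, ht, htp⟩
  have hcne : κ x ≠ κ y := fun h => hne (hinj hx hy h)
  rw [coversIn_topTree_iff_covBy hθ hsl hna hucb hx hy,
    coversIn_topTree_iff_covBy hθ hsl hna hucb hy hx, covBy_iff_mem_uSet hθ hsl hna hucb hx,
    covBy_iff_mem_uSet hθ hsl hna hucb hy]
  refine ⟨?_, fun hadj => ?_⟩
  · rintro (⟨-, hadj⟩ | ⟨-, hadj⟩)
    · exact hadj.symm hθ hcne.symm
    · exact hadj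
  · rcases hac x y hadj with hxy | hyx
    · exact .inl ⟨hxy.lt_of_ne hne, hadj.symm hθ hcne⟩
    · exact .inr ⟨hyx.lt_of_ne hne.symm, hadj⟩

/-- For a finite Γ-colored d-complete poset with Γ simply laced, the
restriction of κ to the top tree is a bijection onto Γ carrying the Hasse diagram of
the top tree isomorphically onto the Dynkin diagram Γ. -/
theorem topTree_graphIso [Fintype Γ] [PartialOrder P] [Fintype P]
    (θ : Γ → Γ → ℤ) (κ : P → Γ) (hθ : DynkinDatum θ) (hsl : SimplyLaced θ)
    (hdc : GColoredDComplete θ κ) :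
    (Set.InjOn κ (TopTree κ) ∧ ∀ a : Γ, ∃ x ∈ TopTree κ, κ x = a) ∧
      ∀ x ∈ TopTree κ, ∀ y ∈ TopTree κ, x ≠ y →
        ((CoversIn (TopTree κ) x y ∨ CoversIn (TopTree κ) y x) ↔
          AdjColor θ (κ x) (κ y)) :=
  topTree_graphIso_general θ κ hθ hsl hdc
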